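/- Sharp interpolation: there exists a constant C = C(d) such that for every c ∈ W^{1,∞}(ℝ^d) ∩ L²_uloc(ℝ^d), ‖c‖_{L^∞(ℝ^d)} ≤ C ‖c‖_{L²_uloc(ℝ^d)}^{2/(d+2)} ‖∇c‖_{L^∞(ℝ^d)}^{d/(d+2)} + C‖c‖_{L²_uloc(ℝ^d)}. -/

import Mathlib

open MeasureTheory Metric Module Real

/-! If `|c x| = 2 m`, the Lipschitz bound keeps `|c| ≥ m` on the ball `B(x, r)` as long as
`L r ≤ m`, so `m² rᵈ |B₁| ≤ A²` for every such `r ≤ 1`. When `m ≤ L` the radius `r = m / L`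
gives `m^(d+2) ≤ A² Lᵈ / |B₁|`; otherwise `r = 1` gives `m² ≤ A² / |B₁|`. -/

lemma le_rpow_inv_of_pow_mul_le {m B V : ℝ} {k : ℕ} (hk : k ≠ 0) (hm : 0 ≤ m) (hV : 0 < V)
    (h : m ^ k * V ≤ B) : m ≤ (B / V) ^ (k⁻¹ : ℝ) := by
  have hB : 0 ≤ B / V := div_nonneg ((by positivity : 0 ≤ m ^ k * V).trans h) hV.le
  rw [le_rpow_inv_iff_of_pos hm hB (by positivity), rpow_natCast, le_div_iff₀ hV]
  exact h

lemma rpow_inv_sq_mul_pow_div {A L V : ℝ} (n : ℕ) (hA : 0 ≤ A) (hL : 0 ≤ L) (hV : 0 < V) :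
    (A ^ 2 * L ^ n / V) ^ ((n + 2 : ℕ)⁻¹ : ℝ) =
      A ^ ((2 : ℝ) / (n + 2)) * L ^ ((n : ℝ) / (n + 2)) / V ^ ((n : ℝ) + 2)⁻¹ := by
  rw [div_rpow (by positivity) hV.le, mul_rpow (by positivity) (by positivity),
    ← rpow_natCast A 2, ← rpow_natCast L n, ← rpow_mul hA, ← rpow_mul hL]
  push_cast
  ring_nf

lemma le_of_forall_sq_mul_pow_mul_le {m A L V : ℝ} (n : ℕ) (hm : 0 ≤ m) (hA : 0 ≤ A)
    (hL : 0 ≤ L) (hV : 0 < V)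
    (h : ∀ r, 0 < r → r ≤ 1 → L * r ≤ m → m ^ 2 * (r ^ n * V) ≤ A ^ 2) :
    m ≤ A ^ ((2 : ℝ) / (n + 2)) * L ^ ((n : ℝ) / (n + 2)) / V ^ ((n : ℝ) + 2)⁻¹ + A / √V := by
  rcases hm.eq_or_lt with rfl | hm
  · positivity
  rcases le_or_gt m L with hmL | hLm
  · replace hL : 0 < L := hm.trans_le hmL
    have hr := h (m / L) (by positivity) ((div_le_one hL).2 hmL) (by rw [mul_div_cancel₀ _ hL.ne'])
    have hroot : m ^ (n + 2) * V ≤ A ^ 2 * L ^ n := by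
      calc m ^ (n + 2) * V = m ^ 2 * ((m / L) ^ n * V) * L ^ n := by
            rw [div_pow]; field_simp; ring
        _ ≤ A ^ 2 * L ^ n := by gcongr
    have := (le_rpow_inv_of_pow_mul_le (by omega) hm.le hV hroot).trans_eq
      (rpow_inv_sq_mul_pow_div n hA hL.le hV)
    exact this.trans (le_add_of_nonneg_right (by positivity))
  · have hr := h 1 one_pos le_rfl (by linarith)
    rw [one_pow, one_mul] at hr
    have := (le_rpow_inv_of_pow_mul_le two_ne_zero hm.le hV hr).trans_eq
      (by rw [Nat.cast_ofNat, ← one_div, ← sqrt_eq_rpow, sqrt_div' _ hV.le, sqrt_sq hA])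
    exact this.trans (le_add_of_nonneg_left (by positivity))

lemma sq_mul_measureReal_ball_le_setIntegral_sq {X : Type*} [MetricSpace X] [ProperSpace X]
    [MeasurableSpace X] [OpensMeasurableSpace X] (μ : Measure X) [IsFiniteMeasureOnCompacts μ]
    {c : X → ℝ} {x : X} {m r R : ℝ} (hc : Continuous c) (hrR : r ≤ R) (hm0 : 0 ≤ m)
    (hm : ∀ y ∈ ball x r, m ≤ |c y|) :
    m ^ 2 * μ.real (ball x r) ≤ ∫ y in ball x R, c y ^ 2 ∂μ := by
  have hint : IntegrableOn (fun y ↦ c y ^ 2) (ball x R) μ :=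
    ((hc.pow 2).continuousOn.integrableOn_compact (isCompact_closedBall x R)).mono_set
      ball_subset_closedBall
  calc m ^ 2 * μ.real (ball x r) = ∫ _ in ball x r, m ^ 2 ∂μ := by
        rw [setIntegral_const, smul_eq_mul, mul_comm]
    _ ≤ ∫ y in ball x r, c y ^ 2 ∂μ := by
        refine setIntegral_mono_on (integrableOn_const measure_ball_lt_top.ne)
          (hint.mono_set (ball_subset_ball hrR)) measurableSet_ball fun y hy ↦ ?_
        rw [← sq_abs (c y)]
        exact pow_le_pow_left₀ hm0 (hm y hy) 2
    _ ≤ ∫ y in ball x R, c y ^ 2 ∂μ :=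
        setIntegral_mono_set hint (.of_forall fun y ↦ sq_nonneg _)
          (ball_subset_ball hrR).eventuallyLE

lemma abs_div_two_le_abs_of_mem_ball {X : Type*} [PseudoMetricSpace X] {c : X → ℝ} {x : X}
    {L r : ℝ} (hlip : ∀ y, |c y - c x| ≤ L * dist y x) (hL : 0 ≤ L) (hLr : L * r ≤ |c x| / 2) :
    ∀ y ∈ ball x r, |c x| / 2 ≤ |c y| := by
  intro y hy
  have hclose : |c y - c x| ≤ |c x| / 2 :=
    (hlip y).trans ((mul_le_mul_of_nonneg_left (mem_ball.1 hy).le hL).trans hLr)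
  have := abs_sub_abs_le_abs_sub (c x) (c y)
  rw [abs_sub_comm] at this
  linarith

lemma measureReal_ball_eq_pow_mul {E : Type*} [NormedAddCommGroup E] [NormedSpace ℝ E]
    [MeasurableSpace E] [BorelSpace E] [FiniteDimensional ℝ E] (μ : Measure E)
    [μ.IsAddHaarMeasure] (x : E) {r : ℝ} (hr : 0 < r) :
    μ.real (ball x r) = r ^ finrank ℝ E * μ.real (ball (0 : E) 1) := by
  rw [measureReal_def, Measure.addHaar_ball_of_pos μ x hr, ENNReal.toReal_mul,
    ENNReal.toReal_ofReal (by positivity), measureReal_def]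

lemma abs_le_of_norm_fderiv_le_of_setIntegral_sq_le {E : Type*} [NormedAddCommGroup E]
    [NormedSpace ℝ E] [MeasurableSpace E] [BorelSpace E] [FiniteDimensional ℝ E]
    (μ : Measure E) [μ.IsAddHaarMeasure] {c : E → ℝ} {A L : ℝ} (hA : 0 ≤ A) (hL : 0 ≤ L)
    (hc : Differentiable ℝ c) (hfd : ∀ x, ‖fderiv ℝ c x‖ ≤ L) {x : E}
    (hloc : ∫ y in ball x 1, c y ^ 2 ∂μ ≤ A ^ 2) :
    let n := finrank ℝ E
    let V := μ.real (ball (0 : E) 1)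
    |c x| / 2 ≤ A ^ ((2 : ℝ) / (n + 2)) * L ^ ((n : ℝ) / (n + 2)) / V ^ ((n : ℝ) + 2)⁻¹
      + A / √V := by
  intro n V
  have hV : 0 < V := ENNReal.toReal_pos (measure_ball_pos μ 0 one_pos).ne' measure_ball_lt_top.ne
  have hlip : ∀ y, |c y - c x| ≤ L * dist y x := fun y ↦ by
    simpa [dist_eq_norm] using convex_univ.norm_image_sub_le_of_norm_fderiv_le
      (fun z _ ↦ hc z) (fun z _ ↦ hfd z) (Set.mem_univ x) (Set.mem_univ y)
  refine le_of_forall_sq_mul_pow_mul_le n (by positivity) hA hL hV fun r hr hr1 hLr ↦ ?_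
  rw [← measureReal_ball_eq_pow_mul μ x hr]
  exact (sq_mul_measureReal_ball_le_setIntegral_sq μ hc.continuous hr1 (by positivity)
    (abs_div_two_le_abs_of_mem_ball hlip hL hLr)).trans hloc

theorem stmt12_general (d : ℕ) :
    ∃ C : ℝ, 0 < C ∧
      ∀ (c : EuclideanSpace ℝ (Fin d) → ℝ) (A L : ℝ), 0 ≤ A → 0 ≤ L →
        Differentiable ℝ c →
        (∀ x, ‖fderiv ℝ c x‖ ≤ L) →
        (∀ x, ∫ y in Metric.ball x 1, (c y) ^ 2 ≤ A ^ 2) →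
        ∀ x, |c x| ≤ C * A ^ ((2 : ℝ) / (d + 2)) * L ^ ((d : ℝ) / (d + 2)) + C * A := by
  set V := (volume : Measure (EuclideanSpace ℝ (Fin d))).real (ball 0 1) with hV_def
  have hV : 0 < V := ENNReal.toReal_pos (measure_ball_pos _ 0 one_pos).ne' measure_ball_lt_top.ne
  refine ⟨2 * (1 / V ^ ((d : ℝ) + 2)⁻¹ + 1 / √V), by positivity,
    fun c A L hA hL hc hfd hloc x ↦ ?_⟩
  have h := abs_le_of_norm_fderiv_le_of_setIntegral_sq_le volume hA hL hc hfd (hloc x)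
  simp only [finrank_euclideanSpace_fin, ← hV_def] at h
  set X := A ^ ((2 : ℝ) / (d + 2)) * L ^ ((d : ℝ) / (d + 2))
  set W := V ^ ((d : ℝ) + 2)⁻¹
  have hX₁ : X / W ≤ (1 / W + 1 / √V) * X := by
    rw [add_mul, one_div_mul_eq_div]
    exact le_add_of_nonneg_right (by positivity)
  have hA₁ : A / √V ≤ (1 / W + 1 / √V) * A := by
    rw [add_mul, one_div_mul_eq_div √V]
    exact le_add_of_nonneg_left (by positivity)
  rw [mul_assoc]
  linarith

/-- Sharp interpolation: there is `C = C(d)` such that for every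
`c ∈ W^{1,∞}(ℝ^d) ∩ L²_uloc(ℝ^d)`,
`‖c‖_{L^∞} ≤ C ‖c‖_{L²_uloc}^{2/(d+2)} ‖∇c‖_{L^∞}^{d/(d+2)} + C ‖c‖_{L²_uloc}`. -/
theorem stmt12 (d : ℕ) (hd : 0 < d) :
    ∃ C : ℝ, 0 < C ∧
      ∀ (c : EuclideanSpace ℝ (Fin d) → ℝ) (A L : ℝ), 0 ≤ A → 0 ≤ L →
        Differentiable ℝ c →
        (∀ x, ‖fderiv ℝ c x‖ ≤ L) →
        (∀ x, ∫ y in Metric.ball x 1, (c y) ^ 2 ≤ A ^ 2) →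
        ∀ x, |c x| ≤ C * A ^ ((2 : ℝ) / (d + 2)) * L ^ ((d : ℝ) / (d + 2)) + C * A :=
  stmt12_general d
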